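/- arXiv:2004.06215 — 6 statements merged into one kernel-verified Lean document; each statement's English description precedes it below -/
import Mathlib

section
/- For any finite set S of M sites, any two fast quorums R₁, R₂ ⊆ S, and any classic quorum Q ⊆ S, the triple intersection R₁ ∩ R₂ ∩ Q is nonempty, provided M ≥ 1. -/
/-!
Two fast quorums overlap in at least half of the sites, since
`|R₁ ∩ R₂| ≥ |R₁| + |R₂| - M ≥ 3M/2 - M`. A classic quorum holds more than half of the
sites, so it cannot avoid a set of at least half of them.
-/

open Finset

namespace Finset

variable {α : Type*} [DecidableEq α] {s t u : Finset α}

theorem card_add_card_le_card_add_card_inter (hs : s ⊆ u) (ht : t ⊆ u) :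
    #s + #t ≤ #u + #(s ∩ t) := by
  rw [← card_union_add_card_inter s t]
  exact Nat.add_le_add_right (card_le_card (union_subset hs ht)) _

theorem card_le_two_mul_card_inter_of_three_mul_card_le_four_mul (hs : s ⊆ u) (ht : t ⊆ u)
    (hs' : 3 * #u ≤ 4 * #s) (ht' : 3 * #u ≤ 4 * #t) :
    #u ≤ 2 * #(s ∩ t) := by
  have := card_add_card_le_card_add_card_inter hs ht
  omega

end Finset

theorem two_fast_one_classic_intersect_general {α : Type*} [DecidableEq α]
    (S R₁ R₂ Q : Finset α)
    (hR₁ : R₁ ⊆ S) (hR₂ : R₂ ⊆ S) (hQ : Q ⊆ S)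
    (hr₁ : 4 * R₁.card ≥ 3 * S.card) (hr₂ : 4 * R₂.card ≥ 3 * S.card)
    (hq : 2 * Q.card > S.card) :
    (R₁ ∩ R₂ ∩ Q).Nonempty := by
  have hhalf : #S ≤ 2 * #(R₁ ∩ R₂) :=
    card_le_two_mul_card_inter_of_three_mul_card_le_four_mul hR₁ hR₂ hr₁ hr₂
  exact inter_nonempty_of_card_lt_card_add_card (inter_subset_left.trans hR₁) hQ (by omega)

theorem two_fast_one_classic_intersect {α : Type*} [DecidableEq α]
    (S R₁ R₂ Q : Finset α) (hM : 1 ≤ S.card)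
    (hR₁ : R₁ ⊆ S) (hR₂ : R₂ ⊆ S) (hQ : Q ⊆ S)
    (hr₁ : 4 * R₁.card ≥ 3 * S.card) (hr₂ : 4 * R₂.card ≥ 3 * S.card)
    (hq : 2 * Q.card > S.card) :
    (R₁ ∩ R₂ ∩ Q).Nonempty :=
  two_fast_one_classic_intersect_general S R₁ R₂ Q hR₁ hR₂ hQ hr₁ hr₂ hq
end

section
/- Let S be a finite set of M sites, R ⊆ S a fast quorum, and Q ⊆ S a classic quorum. Then |R ∩ Q| > |Q| / 2; that is, the sites of R form a strict majority within Q. -/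
theorem Finset.card_add_card_le_card_add_card_inter_s3 {α : Type*} [DecidableEq α]
    {s t u : Finset α} (hs : s ⊆ u) (ht : t ⊆ u) :
    s.card + t.card ≤ u.card + (s ∩ t).card := by
  rw [← card_union_add_card_inter]
  exact Nat.add_le_add_right (card_le_card (union_subset hs ht)) _

theorem fast_quorum_majority_in_classic_general {α : Type*} [DecidableEq α]
    (S R Q : Finset α)
    (hR : R ⊆ S) (hQ : Q ⊆ S)
    (hr : 4 * R.card ≥ 3 * S.card) (hq : 2 * Q.card > S.card) :
    2 * (R ∩ Q).card > Q.card := by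
  have hinter := Finset.card_add_card_le_card_add_card_inter_s3 hR hQ
  omega

theorem fast_quorum_majority_in_classic {α : Type*} [DecidableEq α]
    (S R Q : Finset α) (hM : 1 ≤ S.card)
    (hR : R ⊆ S) (hQ : Q ⊆ S)
    (hr : 4 * R.card ≥ 3 * S.card) (hq : 2 * Q.card > S.card) :
    2 * (R ∩ Q).card > Q.card :=
  fast_quorum_majority_in_classic_general S R Q hR hQ hr hq
end

section
/- Let S be a finite set of M sites and Q ⊆ S a classic quorum of votes received by the leader, where each site in Q votes for exactly one entry. If a fast quorum R ⊆ S all voted for entry e (and the votes of sites in R ∩ Q agree with their votes in R), then e is the unique entry receiving strictly more votes within Q than any other entry; in particular the entry with the most votes in Q is e. -/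
/-!
Every member of `Q ∩ R` votes `e`, while a vote for `f ≠ e` must come from `Q \ R`. Since `Q` and
`R` lie in `S`, `|Q ∩ R| ≥ |Q| + |R| - M ≥ |Q| - M/4 > |Q|/2`, so `e` beats `f` within `Q`.
-/

open Finset

namespace Finset

variable {α E : Type*} [DecidableEq α]

theorem card_add_card_le_card_add_card_inter_s4 {S Q R : Finset α} (hQ : Q ⊆ S) (hR : R ⊆ S) :
    #Q + #R ≤ #S + #(Q ∩ R) := by
  rw [← card_union_add_card_inter]
  exact Nat.add_le_add_right (card_le_card (union_subset hQ hR)) _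

variable [DecidableEq E] {Q R : Finset α} {v : α → E} {e : E}

theorem card_inter_le_card_filter_eq (hv : ∀ x ∈ R, v x = e) :
    #(Q ∩ R) ≤ #(Q.filter fun x => v x = e) :=
  card_le_card fun x hx => mem_filter.2 ⟨(mem_inter.1 hx).1, hv x (mem_inter.1 hx).2⟩

theorem card_filter_eq_le_card_sdiff (hv : ∀ x ∈ R, v x = e) {f : E} (hf : f ≠ e) :
    #(Q.filter fun x => v x = f) ≤ #(Q \ R) :=
  card_le_card fun x hx =>
    mem_sdiff.2 ⟨(mem_filter.1 hx).1, fun hxR => hf ((mem_filter.1 hx).2.symm.trans (hv x hxR))⟩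

theorem card_filter_eq_lt_of_card_lt_two_mul_card_inter (hv : ∀ x ∈ R, v x = e)
    (hQR : #Q < 2 * #(Q ∩ R)) {f : E} (hf : f ≠ e) :
    #(Q.filter fun x => v x = f) < #(Q.filter fun x => v x = e) := by
  have hsplit := card_sdiff_add_card_inter Q R
  have hf_le := card_filter_eq_le_card_sdiff (Q := Q) hv hf
  have he_ge := card_inter_le_card_filter_eq (Q := Q) hv
  omega

end Finset

theorem fast_quorum_entry_has_plurality_general {α E : Type*} [DecidableEq E]
    (S R Q : Finset α) (v : α → E) (e : E)
    (hR : R ⊆ S) (hQ : Q ⊆ S)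
    (hr : 4 * R.card ≥ 3 * S.card) (hq : 2 * Q.card > S.card)
    (hv : ∀ x ∈ R, v x = e) :
    ∀ f : E, f ≠ e →
      (Q.filter fun x => v x = e).card > (Q.filter fun x => v x = f).card := by
  classical
  intro f hf
  have hoverlap := card_add_card_le_card_add_card_inter_s4 hQ hR
  exact card_filter_eq_lt_of_card_lt_two_mul_card_inter hv (by omega) hf

theorem fast_quorum_entry_has_plurality {α E : Type*} [DecidableEq α] [DecidableEq E]
    (S R Q : Finset α) (v : α → E) (e : E) (hM : 1 ≤ S.card)
    (hR : R ⊆ S) (hQ : Q ⊆ S)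
    (hr : 4 * R.card ≥ 3 * S.card) (hq : 2 * Q.card > S.card)
    (hv : ∀ x ∈ R, v x = e) :
    ∀ f : E, f ≠ e →
      (Q.filter fun x => v x = e).card > (Q.filter fun x => v x = f).card :=
  fast_quorum_entry_has_plurality_general S R Q v e hR hQ hr hq hv
end

section
/- At most one entry can be 'chosen' at a given log index: if entry e is chosen (either a fast quorum of sites voted for e, or a classic quorum of sites has e leader-approved) and entry f is chosen by either condition, with each site holding at most one entry at the index, then e = f. -/
/-- Entry `e` is chosen at the index if a fast quorum holds it
or a classic quorum holds it (leader-approved). -/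
def Chosen {α E : Type*} [DecidableEq α] (S : Finset α) (w : α → Option E) (e : E) : Prop :=
  (∃ R : Finset α, R ⊆ S ∧ 4 * R.card ≥ 3 * S.card ∧ ∀ x ∈ R, w x = some e) ∨
  (∃ Q : Finset α, Q ⊆ S ∧ 2 * Q.card > S.card ∧ ∀ x ∈ Q, w x = some e)

theorem Chosen.exists_classic_quorum {α E : Type*} [DecidableEq α] {S : Finset α}
    {w : α → Option E} {e : E} (hM : 1 ≤ S.card) (he : Chosen S w e) :
    ∃ Q : Finset α, Q ⊆ S ∧ 2 * Q.card > S.card ∧ ∀ x ∈ Q, w x = some e := by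
  rcases he with ⟨R, hRS, hR, hw⟩ | hQ
  · exact ⟨R, hRS, by omega, hw⟩
  · exact hQ

theorem chosen_unique {α E : Type*} [DecidableEq α]
    (S : Finset α) (hM : 1 ≤ S.card) (w : α → Option E) (e f : E)
    (he : Chosen S w e) (hf : Chosen S w f) : e = f := by
  obtain ⟨Q₁, hQ₁S, hQ₁, hw₁⟩ := he.exists_classic_quorum hM
  obtain ⟨Q₂, hQ₂S, hQ₂, hw₂⟩ := hf.exists_classic_quorum hM
  obtain ⟨x, hx⟩ := Finset.inter_nonempty_of_card_lt_card_add_card hQ₁S hQ₂S (by omega)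
  rw [Finset.mem_inter] at hx
  exact Option.some.inj ((hw₁ x hx.1).symm.trans (hw₂ x hx.2))
end

section
/- Quorum intersection is preserved under single-site reconfiguration: let S be a finite set and let S' = S ∪ {a} for some a ∉ S (or S' = S \ {a} for a ∈ S). Then any classic quorum of S (size > |S|/2) and any classic quorum of S' (size > |S'|/2) intersect, provided |S| ≥ 1 and |S'| ≥ 1. -/
/-!
Two majorities `Q ⊆ S`, `Q' ⊆ S'` together have more than `(#S + #S') / 2` elements, and
`#S + #S' = #(S ∪ S') + #(S ∩ S')`. When `S` and `S'` differ by a single site, the union exceeds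
the intersection by at most one element, so `#Q + #Q'` exceeds `#(S ∪ S')` and the two quorums,
both inside `S ∪ S'`, must meet.
-/

namespace Finset

variable {α : Type*} [DecidableEq α]

theorem inter_nonempty_of_two_mul_card_gt {S S' Q Q' : Finset α}
    (hQ : Q ⊆ S) (hQ' : Q' ⊆ S') (hq : #S < 2 * #Q) (hq' : #S' < 2 * #Q')
    (hSS' : #(S ∪ S') ≤ #(S ∩ S') + 1) :
    (Q ∩ Q').Nonempty := by
  have hcard := card_union_add_card_inter S S'
  refine inter_nonempty_of_card_lt_card_add_card
    (hQ.trans subset_union_left) (hQ'.trans subset_union_right) ?_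
  omega

theorem card_union_insert_le_card_inter_insert_add_one (a : α) (S : Finset α) :
    #(S ∪ insert a S) ≤ #(S ∩ insert a S) + 1 := by
  rw [union_eq_right.mpr (subset_insert a S), inter_eq_left.mpr (subset_insert a S)]
  exact card_insert_le a S

theorem card_union_erase_le_card_inter_erase_add_one (a : α) (S : Finset α) :
    #(S ∪ S.erase a) ≤ #(S ∩ S.erase a) + 1 := by
  rw [union_eq_left.mpr (erase_subset a S), inter_eq_right.mpr (erase_subset a S)]
  have := pred_card_le_card_erase (s := S) (a := a)
  omega

end Finset

theorem reconfiguration_quorums_intersect_general {α : Type*} [DecidableEq α]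
    (S S' Q Q' : Finset α)
    (hchg : (∃ a, a ∉ S ∧ S' = insert a S) ∨ (∃ a ∈ S, S' = S.erase a))
    (hQ : Q ⊆ S) (hQ' : Q' ⊆ S')
    (hq : 2 * Q.card > S.card) (hq' : 2 * Q'.card > S'.card) :
    (Q ∩ Q').Nonempty := by
  refine Finset.inter_nonempty_of_two_mul_card_gt hQ hQ' hq hq' ?_
  rcases hchg with ⟨a, -, rfl⟩ | ⟨a, -, rfl⟩
  · exact Finset.card_union_insert_le_card_inter_insert_add_one a S
  · exact Finset.card_union_erase_le_card_inter_erase_add_one a S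

theorem reconfiguration_quorums_intersect {α : Type*} [DecidableEq α]
    (S S' Q Q' : Finset α)
    (hchg : (∃ a, a ∉ S ∧ S' = insert a S) ∨ (∃ a ∈ S, S' = S.erase a))
    (hS : 1 ≤ S.card) (hS' : 1 ≤ S'.card)
    (hQ : Q ⊆ S) (hQ' : Q' ⊆ S')
    (hq : 2 * Q.card > S.card) (hq' : 2 * Q'.card > S'.card) :
    (Q ∩ Q').Nonempty :=
  reconfiguration_quorums_intersect_general S S' Q Q' hchg hQ hQ' hq hq'
end

section
/- A newly elected leader learns every chosen self-approved entry: if a fast quorum R voted for entry e at index i, and the new leader collected the self-approved entries of some classic quorum Q of sites (each site in R still holds e at index i), then among the collected votes at index i, e has a strict plurality, so a leader that picks the most-voted entry picks e. -/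
/-!
Every site of the fast quorum `R` votes for `e`, so `e` receives at least the votes of `Q ∩ R`,
while any other entry can only be voted for by sites of `Q \ R`. The quorum sizes
`2 |Q| > |S|` and `4 |R| ≥ 3 |S|` give `|Q| + 2 |R| > 2 |S|`, which is exactly what forces
`|Q ∩ R| > |Q \ R|`.
-/

namespace Finset

variable {α : Type*} [DecidableEq α] {S Q R : Finset α}

theorem card_sdiff_lt_card_inter_of_subset (hQ : Q ⊆ S) (hR : R ⊆ S)
    (h : 2 * S.card < Q.card + 2 * R.card) : (Q \ R).card < (Q ∩ R).card := by
  have h_split := card_inter_add_card_sdiff Q R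
  have h_union := card_union_add_card_inter Q R
  have h_union_le : (Q ∪ R).card ≤ S.card := card_le_card (union_subset hQ hR)
  omega

theorem card_filter_lt_card_filter_of_sdiff_lt_inter {p q : α → Prop} [DecidablePred p]
    [DecidablePred q] (hp : ∀ x ∈ R, p x) (hq : ∀ x ∈ R, ¬q x)
    (h : (Q \ R).card < (Q ∩ R).card) : (Q.filter q).card < (Q.filter p).card := by
  have h_q : Q.filter q ⊆ Q \ R := fun x hx => by
    rw [mem_filter] at hx
    exact mem_sdiff.2 ⟨hx.1, fun hxR => hq x hxR hx.2⟩
  have h_p : Q ∩ R ⊆ Q.filter p := fun x hx => by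
    rw [mem_inter] at hx
    exact mem_filter.2 ⟨hx.1, hp x hx.2⟩
  calc (Q.filter q).card ≤ (Q \ R).card := card_le_card h_q
    _ < (Q ∩ R).card := h
    _ ≤ (Q.filter p).card := card_le_card h_p

end Finset

theorem new_leader_learns_chosen_entry_general {α E : Type*} [DecidableEq E]
    (S R Q : Finset α) (w : α → Option E) (e : E)
    (hR : R ⊆ S) (hQ : Q ⊆ S)
    (hr : 4 * R.card ≥ 3 * S.card) (hq : 2 * Q.card > S.card)
    (hw : ∀ x ∈ R, w x = some e) :
    ∀ f : E, f ≠ e →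
      (Q.filter fun x => w x = some e).card > (Q.filter fun x => w x = some f).card := by
  intro f hf
  classical
  have h_quorums : (Q \ R).card < (Q ∩ R).card :=
    Finset.card_sdiff_lt_card_inter_of_subset hQ hR (by omega)
  refine Finset.card_filter_lt_card_filter_of_sdiff_lt_inter hw (fun x hx hfx => hf ?_) h_quorums
  exact Option.some_injective _ (hfx.symm.trans (hw x hx))

theorem new_leader_learns_chosen_entry {α E : Type*} [DecidableEq α] [DecidableEq E]
    (S R Q : Finset α) (w : α → Option E) (e : E) (i : ℕ) (hM : 1 ≤ S.card)
    (hR : R ⊆ S) (hQ : Q ⊆ S)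
    (hr : 4 * R.card ≥ 3 * S.card) (hq : 2 * Q.card > S.card)
    (hw : ∀ x ∈ R, w x = some e) :
    ∀ f : E, f ≠ e →
      (Q.filter fun x => w x = some e).card > (Q.filter fun x => w x = some f).card :=
  new_leader_learns_chosen_entry_general S R Q w e hR hQ hr hq hw
end
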